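/- Let E be an elliptic curve defined over ℚ, let K be a number field that is a finite Galois extension of ℚ, and let m and n be positive integers with n ≥ 2. Suppose that the mn-torsion subgroup of E(K) is isomorphic to ℤ/mℤ × ℤ/mnℤ, and let P ∈ E(K) be a point of additive order mn. Write the point mP (which is nonzero) in affine coordinates as mP = (x₀, y₀) with x₀, y₀ ∈ K. Then the degree [ℚ(x₀, y₀) : ℚ] of the field generated over ℚ by the coordinates of mP divides gcd(φ(n), [K : ℚ]), where φ is Euler's totient function. -/

import Mathlib

/-! The Galois group of `K/ℚ` acts on `E(K)` by group automorphisms and preserves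
`E(K)[mn] ≅ ℤ/m × ℤ/mn`. Multiplication by `m` sends this group onto a cyclic group of order `n`,
which `Q = mP` generates; so every `σ Q = m (σ P)` is a multiple of `Q`, and the Galois group acts
on `⟨Q⟩` through `Aut ⟨Q⟩ ≅ (ℤ/n)ˣ`. The kernel of this action fixes `Q = (x₀, y₀)`, hence
`ℚ(x₀, y₀)`, so `[ℚ(x₀, y₀) : ℚ]`, the index of the fixing subgroup, divides `φ(n)`. -/

open WeierstrassCurve

/-- The `N`-torsion subgroup of an additive commutative group. -/
def nTorsion (G : Type*) [AddCommGroup G] (N : ℕ) : AddSubgroup G where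
  carrier := {P | N • P = 0}
  zero_mem' := smul_zero N
  add_mem' := fun {a b} ha hb => by
    simp only [Set.mem_setOf_eq] at *
    rw [smul_add, ha, hb, add_zero]
  neg_mem' := fun {a} ha => by
    simp only [Set.mem_setOf_eq] at *
    rw [smul_neg, ha, neg_zero]

open AddSubgroup

section CyclicSubgroup

variable {A : Type*} [AddCommGroup A] {m n : ℕ} [NeZero m]

lemma addOrderOf_nsmul_of_addOrderOf_eq_mul {p : A} (hp : addOrderOf p = m * n) :
    addOrderOf (m • p) = n := by
  rw [addOrderOf_nsmul_of_dvd (NeZero.ne m) ⟨n, hp⟩, hp,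
    Nat.mul_div_cancel_left n (Nat.pos_of_neZero m)]

variable [NeZero n]

lemma ZMod.prod_nsmul_mem_zmultiples_nsmul {p : ZMod m × ZMod (m * n)}
    (hp : addOrderOf p = m * n) (r : ZMod m × ZMod (m * n)) : m • r ∈ zmultiples (m • p) := by
  -- both `zmultiples (m • p)` and the image of `m • ·` are `0 × m(ℤ/mn)`, of order `n`
  set g : ZMod m × ZMod (m * n) := (0, m)
  have hmul : ∀ x : ZMod m × ZMod (m * n), m • x = x.2.val • g := fun x => by
    ext
    · simp [g]
    · simp [g, mul_comm]
  have hg : Nat.card (zmultiples g) ≤ n := by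
    rw [Nat.card_zmultiples]
    refine addOrderOf_le_of_nsmul_eq_zero (Nat.pos_of_neZero n) ?_
    ext <;> simp [g, ← Nat.cast_mul, mul_comm]
  have : zmultiples (m • p) = zmultiples g := by
    refine eq_of_le_of_card_ge ?_ ?_
    · rw [zmultiples_le, hmul]
      exact nsmul_mem (mem_zmultiples g) _
    · simpa only [Nat.card_zmultiples, addOrderOf_nsmul_of_addOrderOf_eq_mul hp] using hg
  rw [this, hmul]
  exact nsmul_mem (mem_zmultiples g) _

lemma nsmul_mem_zmultiples_nsmul_of_addEquiv (e : A ≃+ ZMod m × ZMod (m * n)) {p : A}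
    (hp : addOrderOf p = m * n) (r : A) : m • r ∈ zmultiples (m • p) := by
  have := ZMod.prod_nsmul_mem_zmultiples_nsmul (e.addOrderOf_eq p ▸ hp) (e r)
  obtain ⟨k, hk⟩ := mem_zmultiples_iff.mp this
  exact mem_zmultiples_iff.mpr ⟨k, e.injective (by simp only [map_zsmul, map_nsmul, hk])⟩

lemma nsmul_mem_zmultiples_nsmul_of_nTorsion (e : nTorsion A (m * n) ≃+ ZMod m × ZMod (m * n))
    {P : A} (hP : addOrderOf P = m * n) {R : A} (hR : (m * n) • R = 0) :
    m • R ∈ zmultiples (m • P) := by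
  have hPT : P ∈ nTorsion A (m * n) := hP ▸ addOrderOf_nsmul_eq_zero P
  have := mem_map_of_mem (nTorsion A (m * n)).subtype <|
    nsmul_mem_zmultiples_nsmul_of_addEquiv e (p := ⟨P, hPT⟩) (by rwa [addOrderOf_mk]) ⟨R, hR⟩
  rwa [AddMonoidHom.map_zmultiples, map_nsmul, map_nsmul] at this

end CyclicSubgroup

section StableSubgroup

variable {G A : Type*} [Group G] [AddCommGroup A] [DistribMulAction G A]

lemma IsAddCyclic.card_addAut (C : Type*) [AddGroup C] [Finite C] [IsAddCyclic C] :
    Nat.card (AddAut C) = Nat.totient (Nat.card C) :=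
  (Nat.card_congr AddEquiv.toMultiplicative).trans (IsCyclic.card_mulAut (Multiplicative C))

variable (G) in
def DistribMulAction.toAddAutOfStable (C : AddSubgroup A) (hC : ∀ g : G, ∀ a ∈ C, g • a ∈ C) :
    G →* Multiplicative (AddAut C) where
  toFun g := .ofAdd
    { toFun a := ⟨g • a, hC g a a.2⟩
      invFun a := ⟨g⁻¹ • a, hC g⁻¹ a a.2⟩
      left_inv a := Subtype.ext (inv_smul_smul g (a : A))
      right_inv a := Subtype.ext (smul_inv_smul g (a : A))
      map_add' a b := Subtype.ext (smul_add g (a : A) b) }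
  map_one' := by ext; simp
  map_mul' g h := by ext; simp [mul_smul]

theorem index_dvd_totient_of_smul_mem_zmultiples {Q : A} (hQ : ∀ g : G, g • Q ∈ zmultiples Q)
    {H : Subgroup G} (hH : MulAction.stabilizer G Q ≤ H) :
    H.index ∣ Nat.totient (addOrderOf Q) := by
  rcases eq_or_ne (addOrderOf Q) 0 with h0 | h0
  · simp [h0] -- `φ 0 = 0`
  have hC : ∀ g : G, ∀ a ∈ zmultiples Q, g • a ∈ zmultiples Q := by
    rintro g _ ⟨k, rfl⟩
    rw [smul_comm]
    exact zsmul_mem (hQ g) k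
  set χ := DistribMulAction.toAddAutOfStable G (zmultiples Q) hC
  have hker : χ.ker ≤ H := fun g hg => hH <| show g • Q = Q from
    congrArg Subtype.val <|
      DFunLike.congr_fun (congrArg Multiplicative.toAdd hg) (⟨Q, mem_zmultiples Q⟩ : zmultiples Q)
  have : Finite (zmultiples Q) := Nat.finite_of_card_ne_zero (by rwa [Nat.card_zmultiples])
  calc H.index ∣ χ.ker.index := Subgroup.index_dvd_of_le hker
    _ = Nat.card χ.range := Subgroup.index_ker χ
    _ ∣ Nat.card (AddAut (zmultiples Q)) := Subgroup.card_subgroup_dvd_card χ.range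
    _ = Nat.totient (addOrderOf Q) := by rw [IsAddCyclic.card_addAut, Nat.card_zmultiples]

end StableSubgroup

namespace WeierstrassCurve.Affine.Point

section GaloisAction

variable {R K : Type*} [CommRing R] [Field K] [DecidableEq K] [Algebra R K]
  {W : WeierstrassCurve R}

noncomputable instance : DistribMulAction (K ≃ₐ[R] K) (W.baseChange K).toAffine.Point where
  smul σ := map (W' := W.toAffine) (σ : K →ₐ[R] K)
  one_smul P := by cases P <;> rfl
  mul_smul σ τ P := by cases P <;> rfl
  smul_zero σ := rfl
  smul_add σ := map_add _

end GaloisAction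

lemma stabilizer_some_le_fixingSubgroup {k K : Type*} [Field k] [Field K] [DecidableEq K]
    [Algebra k K] {W : WeierstrassCurve k} {x y : K}
    (h : (W.baseChange K).toAffine.Nonsingular x y) :
    MulAction.stabilizer (K ≃ₐ[k] K) (some x y h) ≤
      (IntermediateField.adjoin k {x, y}).fixingSubgroup := by
  intro σ hσ
  obtain ⟨hx, hy⟩ : σ x = x ∧ σ y = y := some.inj hσ
  have hF : ((σ : K →ₐ[k] K).comp (IntermediateField.adjoin k {x, y}).val) =
      (IntermediateField.adjoin k {x, y}).val :=
    IntermediateField.adjoin_algHom_ext k <| by rintro _ (rfl | rfl) <;> assumption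
  exact (IntermediateField.mem_fixingSubgroup_iff _ _).mpr fun z hz =>
    DFunLike.congr_fun hF ⟨z, hz⟩

end WeierstrassCurve.Affine.Point

open Classical in
theorem degree_of_multiple_point_divides_general (E : WeierstrassCurve ℚ)
    (K : Type*) [Field K] [NumberField K] [IsGalois ℚ K]
    (m n : ℕ) (hm : 0 < m) (hn : 2 ≤ n)
    (htors : Nonempty
      (nTorsion (E.baseChange K).toAffine.Point (m * n) ≃+ (ZMod m × ZMod (m * n))))
    (P : (E.baseChange K).toAffine.Point) (hP : addOrderOf P = m * n)
    (x₀ y₀ : K) (hxy : (E.baseChange K).toAffine.Nonsingular x₀ y₀)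
    (hmP : m • P = WeierstrassCurve.Affine.Point.some _ _ hxy) :
    Module.finrank ℚ (IntermediateField.adjoin ℚ ({x₀, y₀} : Set K)) ∣
      Nat.gcd (Nat.totient n) (Module.finrank ℚ K) := by
  obtain ⟨e⟩ := htors
  have : NeZero m := ⟨hm.ne'⟩
  have : NeZero n := ⟨by omega⟩
  have hstable (σ : K ≃ₐ[ℚ] K) : σ • (m • P) ∈ zmultiples (m • P) := by
    rw [smul_comm]
    refine nsmul_mem_zmultiples_nsmul_of_nTorsion e hP ?_
    rw [smul_comm, ← hP, addOrderOf_nsmul_eq_zero, smul_zero]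
  have hdvd_totient :
      Module.finrank ℚ (IntermediateField.adjoin ℚ ({x₀, y₀} : Set K)) ∣ n.totient := by
    rw [IntermediateField.finrank_eq_fixingSubgroup_index,
      ← addOrderOf_nsmul_of_addOrderOf_eq_mul hP]
    exact index_dvd_totient_of_smul_mem_zmultiples hstable
      (hmP ▸ Affine.Point.stabilizer_some_le_fixingSubgroup hxy)
  exact Nat.dvd_gcd hdvd_totient ⟨_, (Module.finrank_mul_finrank ℚ _ K).symm⟩

open Classical in
theorem degree_of_multiple_point_divides (E : WeierstrassCurve ℚ) [E.IsElliptic]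
    (K : Type*) [Field K] [NumberField K] [IsGalois ℚ K]
    (m n : ℕ) (hm : 0 < m) (hn : 2 ≤ n)
    (htors : Nonempty
      (nTorsion (E.baseChange K).toAffine.Point (m * n) ≃+ (ZMod m × ZMod (m * n))))
    (P : (E.baseChange K).toAffine.Point) (hP : addOrderOf P = m * n)
    (x₀ y₀ : K) (hxy : (E.baseChange K).toAffine.Nonsingular x₀ y₀)
    (hmP : m • P = WeierstrassCurve.Affine.Point.some _ _ hxy) :
    Module.finrank ℚ (IntermediateField.adjoin ℚ ({x₀, y₀} : Set K)) ∣
      Nat.gcd (Nat.totient n) (Module.finrank ℚ K) :=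
  degree_of_multiple_point_divides_general E K m n hm hn htors P hP x₀ y₀ hxy hmP
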